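/- Let 0 < m < L, let λ_1, ..., λ_d ∈ [m, L], let K be a positive integer, let σ be a permutation of {1,...,K}, and set η_k = (π/2)·(1/√(2·r_{σ(k)})) where r_k = (L+m)/2 - ((L-m)/2)·cos(((k-1/2)π)/K). If sequences (x_k), (y_k) in ℝ^d satisfy x_k[j] - y_k[j] = cos(√(2λ_j)·η_k)·(x_{k-1}[j] - y_{k-1}[j]) for all j, k, then ‖x_K - y_K‖ ≤ 2·(1 - 2√m/(√L + √m))^K · ‖x_0 - y_0‖. -/

import Mathlib

open Real

/-!
Each coordinate of `x_k - y_k` is multiplied by `cos (√(2λ) η_k) = cos ((π/2) √(λ / r_{σ k}))`,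
whose absolute value is at most `|1 - λ / r_{σ k}|`. The `r_k` are the roots of the Chebyshev
polynomial `T_K` moved affinely from `[-1, 1]` to `[m, L]`, so `∏_k (1 - λ / r_k) = T_K(s) / T_K(a)`
with `s ∈ [-1, 1]` the image of `λ` and `a = (L + m) / (L - m)`. Since `|T_K(s)| ≤ 1` and
`a = (t + t⁻¹) / 2` with `t = (√L + √m) / (√L - √m)`, we get
`T_K(a) = (t^K + t^{-K}) / 2 ≥ t^K / 2`, hence the factor `2 t^{-K}` in every coordinate, and
`t⁻¹ = 1 - 2√m / (√L + √m)`.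
-/

open Finset Polynomial Polynomial.Chebyshev

namespace Polynomial.Chebyshev

theorem eval_T_real_eq_prod (n : ℕ) (x : ℝ) :
    (T ℝ n).eval x = 2 ^ (n - 1) * ∏ k ∈ range n, (x - cos ((2 * k + 1) * π / (2 * n))) := by
  have hinj : Set.InjOn (fun k : ℕ ↦ cos ((2 * k + 1) * π / (2 * n))) (range n) :=
    (range n).nodup_map_iff_injOn.mp (roots_T_real_nodup n)
  have hcard : Multiset.card (T ℝ n).roots = (T ℝ n).natDegree := by
    rw [roots_T_real, natDegree_T, Finset.card_val, card_image_of_injOn hinj, card_range,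
      Int.natAbs_natCast]
  conv_lhs => rw [← C_leadingCoeff_mul_prod_multiset_X_sub_C hcard]
  rw [roots_T_real, image_val_of_injOn hinj, leadingCoeff_T, Int.natAbs_natCast]
  simp [eval_multiset_prod, Finset.prod_eq_multiset_prod]

theorem two_mul_eval_T_real_half_add_inv (n : ℕ) {t : ℝ} (ht : 0 < t) :
    2 * (T ℝ n).eval ((t + t⁻¹) / 2) = t ^ n + t⁻¹ ^ n := by
  rw [← cosh_log ht, T_real_cosh, Int.cast_natCast, ← log_pow, cosh_log (by positivity), inv_pow]
  ring

end Polynomial.Chebyshev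

theorem eq_prod_mul_of_forall_succ_eq_mul {R : Type*} [CommMonoid R] {n : ℕ} (u : ℕ → R)
    (c : Fin n → R) (h : ∀ k : Fin n, u (k + 1) = c k * u k) : u n = (∏ k, c k) * u 0 := by
  induction n with
  | zero => simp
  | succ n ih =>
    have hlast : u (n + 1) = c (Fin.last n) * u n := h (Fin.last n)
    rw [Fin.prod_univ_castSucc, hlast, ih (fun k ↦ c k.castSucc) fun k ↦ h k.castSucc]
    ac_rfl

theorem EuclideanSpace.norm_le_mul_norm_of_forall {𝕜 ι : Type*} [RCLike 𝕜] [Fintype ι]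
    {v w : EuclideanSpace 𝕜 ι} {C : ℝ} (hC : 0 ≤ C) (h : ∀ i, ‖v i‖ ≤ C * ‖w i‖) :
    ‖v‖ ≤ C * ‖w‖ := by
  rw [EuclideanSpace.norm_eq, EuclideanSpace.norm_eq, ← sqrt_sq hC, ← sqrt_mul (sq_nonneg C),
    mul_sum]
  gcongr with i
  rw [← mul_pow]
  exact pow_le_pow_left₀ (norm_nonneg _) (h i) 2

theorem cos_pi_div_two_mul_le_one_sub_sq {x : ℝ} (h0 : 0 ≤ x) (h1 : x ≤ 1) :
    cos (π / 2 * x) ≤ 1 - x ^ 2 := by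
  -- `cos (πx/2) = 1 - 2 sin² (πx/4)`, and `sin (πx/4) ≥ x sin (π/4)` by concavity of `sin`
  have hsin : x * (√2 / 2) ≤ sin (x * (π / 4)) := by
    have := strictConcaveOn_sin_Icc.concaveOn.2 (Set.left_mem_Icc.2 pi_pos.le)
      (y := π / 4) ⟨by positivity, by linarith [pi_pos]⟩ (sub_nonneg.2 h1) h0 (sub_add_cancel 1 x)
    simpa [smul_eq_mul, sin_pi_div_four] using this
  have hsq : (x * (√2 / 2)) ^ 2 ≤ sin (x * (π / 4)) ^ 2 :=
    pow_le_pow_left₀ (by positivity) hsin 2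
  have h2 : √2 ^ 2 = 2 := sq_sqrt zero_le_two
  rw [show π / 2 * x = 2 * (x * (π / 4)) by ring, cos_two_mul_eq_one_sub]
  nlinarith

theorem abs_cos_pi_div_two_mul_sqrt_le (u : ℝ) : |cos (π / 2 * √u)| ≤ |1 - u| := by
  rcases le_or_gt u 0 with hu | hu
  · rw [sqrt_eq_zero'.2 hu, mul_zero, cos_zero, abs_one, abs_of_nonneg (by linarith)]
    linarith
  set x := √u
  have hxu : x ^ 2 = u := sq_sqrt hu.le
  have hx0 : 0 ≤ x := sqrt_nonneg u
  rw [← hxu]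
  rcases le_or_gt x 1 with h1 | h1
  · have hcos : 0 ≤ cos (π / 2 * x) :=
      cos_nonneg_of_mem_Icc ⟨by nlinarith [pi_pos], by nlinarith [pi_pos]⟩
    rw [abs_of_nonneg hcos, abs_of_nonneg (by nlinarith)]
    exact cos_pi_div_two_mul_le_one_sub_sq hx0 h1
  · have hshift : cos (π / 2 * x) = -sin (π / 2 * (x - 1)) := by
      rw [show π / 2 * x = π / 2 * (x - 1) + π / 2 by ring, cos_add_pi_div_two]
    rw [hshift, abs_neg, abs_of_nonpos (a := 1 - x ^ 2) (by nlinarith)]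
    calc |sin (π / 2 * (x - 1))| ≤ |π / 2 * (x - 1)| := abs_sin_le_abs
      _ = π / 2 * (x - 1) := abs_of_nonneg (by nlinarith [pi_pos])
      _ ≤ -(1 - x ^ 2) := by nlinarith [pi_lt_four]

theorem one_sub_div_affine_eq {m L c : ℝ} (hm : 0 < m) (hmL : m < L) (hc : c ≤ 1) (lam : ℝ) :
    1 - lam / ((L + m) / 2 - (L - m) / 2 * c) =
      ((L + m - 2 * lam) / (L - m) - c) / ((L + m) / (L - m) - c) := by
  have hLm : L - m ≠ 0 := (sub_pos.2 hmL).ne'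
  have hden : L + m - (L - m) * c ≠ 0 := by nlinarith
  rw [div_sub' hLm, div_sub' hLm, div_div_div_cancel_right₀ hLm, eq_div_iff hden]
  field_simp
  ring

noncomputable def chebyshevNode (m L : ℝ) (K k : ℕ) : ℝ :=
  (L + m) / 2 - (L - m) / 2 * cos ((2 * k + 1) * π / (2 * K))

section ChebyshevNode

variable {m L : ℝ}

theorem prod_one_sub_div_chebyshevNode (hm : 0 < m) (hmL : m < L) (lam : ℝ) (K : ℕ) :
    ∏ k ∈ range K, (1 - lam / chebyshevNode m L K k) =
      (T ℝ K).eval ((L + m - 2 * lam) / (L - m)) / (T ℝ K).eval ((L + m) / (L - m)) := by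
  unfold chebyshevNode
  rw [prod_congr rfl fun k _ ↦ one_sub_div_affine_eq hm hmL (cos_le_one _) lam, prod_div_distrib,
    eval_T_real_eq_prod, eval_T_real_eq_prod, mul_div_mul_left _ _ (by positivity)]

theorem prod_abs_one_sub_div_chebyshevNode_le (hm : 0 < m) (hmL : m < L) {lam : ℝ}
    (hlam : lam ∈ Set.Icc m L) (K : ℕ) :
    ∏ k ∈ range K, |1 - lam / chebyshevNode m L K k| ≤
      2 * (1 - 2 * √m / (√L + √m)) ^ K := by
  have hLm : 0 < L - m := sub_pos.2 hmL
  have hsm : 0 < √m := sqrt_pos.2 hm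
  have hsmL : √m < √L := sqrt_lt_sqrt hm.le hmL
  set t := (√L + √m) / (√L - √m) with ht
  have ht0 : 0 < t := div_pos (by linarith) (by linarith)
  have hrate : 1 - 2 * √m / (√L + √m) = t⁻¹ := by
    rw [ht, inv_div]
    field_simp
    ring
  have hJoukowski : (L + m) / (L - m) = (t + t⁻¹) / 2 := by
    have hdiff : √L - √m ≠ 0 := (sub_pos.2 hsmL).ne'
    have hdiff2 : √L ^ 2 - √m ^ 2 ≠ 0 := by nlinarith
    conv_lhs => rw [← sq_sqrt hm.le, ← sq_sqrt (hm.trans hmL).le]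
    rw [ht, inv_div]
    field_simp
    ring
  have hnum : |(T ℝ K).eval ((L + m - 2 * lam) / (L - m))| ≤ 1 :=
    abs_eval_T_real_le_one K <| abs_le.2 ⟨by rw [le_div_iff₀ hLm]; linarith [hlam.2],
      by rw [div_le_iff₀ hLm]; linarith [hlam.1]⟩
  have hden : t ^ K ≤ 2 * (T ℝ K).eval ((L + m) / (L - m)) := by
    rw [hJoukowski, two_mul_eval_T_real_half_add_inv K ht0]
    exact le_add_of_nonneg_right (by positivity)
  have htK : 0 < t ^ K := pow_pos ht0 K
  rw [← abs_prod, prod_one_sub_div_chebyshevNode hm hmL, abs_div,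
    abs_of_pos (by linarith : 0 < (T ℝ K).eval ((L + m) / (L - m))), hrate, inv_pow,
    div_le_iff₀ (by linarith)]
  calc |(T ℝ K).eval ((L + m - 2 * lam) / (L - m))| ≤ 1 := hnum
    _ = 2 * (t ^ K)⁻¹ * (t ^ K / 2) := by field_simp
    _ ≤ 2 * (t ^ K)⁻¹ * (T ℝ K).eval ((L + m) / (L - m)) := by gcongr; linarith

end ChebyshevNode

theorem stmt15_general (m L : ℝ) (hm : 0 < m) (hmL : m < L)
    (d K : ℕ)
    (lam : Fin d → ℝ) (hlam : ∀ j, lam j ∈ Set.Icc m L)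
    (σ : Equiv.Perm (Fin K))
    (r : Fin K → ℝ)
    (hr : ∀ k : Fin K, r k =
      (L + m) / 2 - (L - m) / 2 * Real.cos ((((k : ℕ) : ℝ) + 1 - 1 / 2) * π / K))
    (η : Fin K → ℝ) (hη : ∀ k, η k = π / 2 * (1 / Real.sqrt (2 * r (σ k))))
    (x y : ℕ → EuclideanSpace ℝ (Fin d))
    (hstep : ∀ j : Fin d, ∀ k : Fin K,
      x (k + 1) j - y (k + 1) j =
        Real.cos (Real.sqrt (2 * lam j) * η k) * (x k j - y k j)) :
    ‖x K - y K‖ ≤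
      2 * (1 - 2 * Real.sqrt m / (Real.sqrt L + Real.sqrt m)) ^ K * ‖x 0 - y 0‖ := by
  have hnode : ∀ k : Fin K, r k = chebyshevNode m L K k := fun k ↦ by
    rw [hr k, chebyshevNode]
    ring_nf
  have hcontract : ∀ j, |∏ k, cos (√(2 * lam j) * η k)| ≤ 2 * (1 - 2 * √m / (√L + √m)) ^ K := by
    intro j
    have hangle : ∀ k, √(2 * lam j) * (π / 2 * (1 / √(2 * r k))) = π / 2 * √(lam j / r k) :=
      fun k ↦ by
        rw [← mul_div_mul_left (lam j) (r k) two_ne_zero, sqrt_div (by linarith [(hlam j).1])]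
        ring
    calc |∏ k, cos (√(2 * lam j) * η k)| = ∏ k, |cos (π / 2 * √(lam j / r k))| := by
          rw [abs_prod, ← Equiv.prod_comp σ fun k ↦ |cos (π / 2 * √(lam j / r k))|]
          simp only [hη, hangle]
      _ ≤ ∏ k, |1 - lam j / r k| :=
          prod_le_prod (fun _ _ ↦ abs_nonneg _) fun k _ ↦ abs_cos_pi_div_two_mul_sqrt_le _
      _ = ∏ k ∈ range K, |1 - lam j / chebyshevNode m L K k| := by
          simp only [hnode]
          exact Fin.prod_univ_eq_prod_range (fun k ↦ |1 - lam j / chebyshevNode m L K k|) K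
      _ ≤ 2 * (1 - 2 * √m / (√L + √m)) ^ K :=
          prod_abs_one_sub_div_chebyshevNode_le hm hmL (hlam j) K
  have hrate : 0 ≤ 1 - 2 * √m / (√L + √m) :=
    sub_nonneg.2 <| (div_le_one (by positivity)).2 (by linarith [sqrt_lt_sqrt hm.le hmL])
  refine EuclideanSpace.norm_le_mul_norm_of_forall (by positivity) fun j ↦ ?_
  simp only [PiLp.sub_apply, Real.norm_eq_abs]
  rw [eq_prod_mul_of_forall_succ_eq_mul (fun n ↦ x n j - y n j) _ (hstep j), abs_mul]
  exact mul_le_mul_of_nonneg_right (hcontract j) (abs_nonneg _)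

theorem stmt15 (m L : ℝ) (hm : 0 < m) (hmL : m < L)
    (d K : ℕ) (hd : 0 < d) (hK : 0 < K)
    (lam : Fin d → ℝ) (hlam : ∀ j, lam j ∈ Set.Icc m L)
    (σ : Equiv.Perm (Fin K))
    (r : Fin K → ℝ)
    (hr : ∀ k : Fin K, r k =
      (L + m) / 2 - (L - m) / 2 * Real.cos ((((k : ℕ) : ℝ) + 1 - 1 / 2) * π / K))
    (η : Fin K → ℝ) (hη : ∀ k, η k = π / 2 * (1 / Real.sqrt (2 * r (σ k))))
    (x y : ℕ → EuclideanSpace ℝ (Fin d))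
    (hstep : ∀ j : Fin d, ∀ k : Fin K,
      x (k + 1) j - y (k + 1) j =
        Real.cos (Real.sqrt (2 * lam j) * η k) * (x k j - y k j)) :
    ‖x K - y K‖ ≤
      2 * (1 - 2 * Real.sqrt m / (Real.sqrt L + Real.sqrt m)) ^ K * ‖x 0 - y 0‖ :=
  stmt15_general m L hm hmL d K lam hlam σ r hr η hη x y hstep
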